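/- The rational function F(t_1,…,t_n) = ∏_{1≤i<j≤n} (1 − t_i/t_j)/(q − q⁻¹ t_i/t_j) is q-symmetric: π(σ)F = F for every σ ∈ S_n. -/

import Mathlib

noncomputable section

open scoped TensorProduct
open MvPolynomial

/-! ## Rational functions and the q-symmetrization machinery -/

variable (K : Type) [Field K] (ι : Type)

/-- The field `K(t)` of rational functions in the variables `t_i`, `i : ι`. -/
abbrev RatF := FractionRing (MvPolynomial ι K)

/-- The variable `t_i` as a rational function. -/
def tvar (i : ι) : RatF K ι := algebraMap (MvPolynomial ι K) (RatF K ι) (X i)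

/-- A scalar `c : K` as a constant rational function. -/
def cst (c : K) : RatF K ι := algebraMap K (RatF K ι) c

/-- Substitution of variables `t_i ↦ t_{f i}` along an injective map `f`, as a `K`-algebra
endomorphism of the field of rational functions. -/
def renHom (f : ι → ι) (hf : Function.Injective f) : RatF K ι →ₐ[K] RatF K ι :=
  IsFractionRing.liftAlgHom (R := K)
    (g := (IsScalarTower.toAlgHom K (MvPolynomial ι K) (RatF K ι)).comp (rename f))
    ((IsFractionRing.injective _ _).comp (rename_injective f hf))

variable (A : Type) [Ring A] [Algebra K A]

/-- The algebra `A(t) = A ⊗_K K(t)` of `A`-valued rational functions. -/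
abbrev AVal := A ⊗[K] RatF K ι

/-- The embedding `K(t) → A(t)`. -/
def inF : RatF K ι →ₐ[K] AVal K ι A := Algebra.TensorProduct.includeRight

/-- Substitution of variables `t_i ↦ t_{f i}` on `A`-valued rational functions. -/
def renA (f : ι → ι) (hf : Function.Injective f) : AVal K ι A →ₐ[K] AVal K ι A :=
  Algebra.TensorProduct.map (AlgHom.id K A) (renHom K ι f hf)

/-- Extension of a permutation of `Fin k` to a permutation of the whole variable index set `ι`
along an injective enumeration `v : Fin k → ι` of some of the variables. -/
def extPerm {k : ℕ} (v : Fin k → ι) (hv : Function.Injective v) (σ : Equiv.Perm (Fin k)) :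
    Equiv.Perm ι :=
  letI := Classical.decPred (· ∈ Set.range v)
  σ.extendDomain (Equiv.ofInjective v hv)

variable (q : K)

/-- The elementary weight `w(t_i/t_j) = (q⁻¹ − q t_i/t_j)/(q − q⁻¹ t_i/t_j)`. -/
def wfac (i j : ι) : RatF K ι :=
  (cst K ι q⁻¹ - cst K ι q * (tvar K ι i / tvar K ι j)) /
    (cst K ι q - cst K ι q⁻¹ * (tvar K ι i / tvar K ι j))

/-- The weight `∏_{ℓ<ℓ', σ(ℓ)>σ(ℓ')} w(t_{σ(ℓ')}/t_{σ(ℓ)})` of the operator `π(σ)` acting on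
functions of the variables `t_{v 0}, …, t_{v (k-1)}`. -/
def qWeight {k : ℕ} (v : Fin k → ι) (σ : Equiv.Perm (Fin k)) : RatF K ι :=
  ∏ p ∈ Finset.univ.filter (fun p : Fin k × Fin k => p.1 < p.2 ∧ σ p.2 < σ p.1),
    wfac K ι q (v (σ p.2)) (v (σ p.1))

/-- The operator `π(σ)`, `σ ∈ S_k`:
`π(σ)G = ∏_{ℓ<ℓ', σ(ℓ)>σ(ℓ')} w(t_{σ(ℓ')}/t_{σ(ℓ)}) ⬝ G(t_{σ(1)},…,t_{σ(k)})`, acting on `A`-valued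
rational functions of the variables `t_{v 0}, …, t_{v (k-1)}`. -/
def piOp {k : ℕ} (v : Fin k → ι) (hv : Function.Injective v) (σ : Equiv.Perm (Fin k)) :
    AVal K ι A → AVal K ι A := fun G =>
  inF K ι A (qWeight K ι q v σ) * renA K ι A (extPerm ι v hv σ) (Equiv.injective _) G

/-- The operator `π(σ_{i,j})` attached to a transposition:
`π(σ_{i,j})G = w(t_i/t_j) ⬝ (G with t_i, t_j interchanged)`.  For `j = i+1` this is the
operator `π(σ_{i,i+1})` of the paper. -/
def piElem (i j : ι) : AVal K ι A → AVal K ι A := fun G =>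
  letI := Classical.decEq ι
  inF K ι A (wfac K ι q i j) * renA K ι A (Equiv.swap i j) (Equiv.injective _) G

/-- The `q`-symmetrization operator `Sym̄ = (1/k!) ∑_{σ ∈ S_k} π(σ)` over the variables
`t_{v 0}, …, t_{v (k-1)}`. -/
def qSym {k : ℕ} (v : Fin k → ι) (hv : Function.Injective v) :
    AVal K ι A → AVal K ι A := fun G =>
  ((k.factorial : K))⁻¹ • ∑ σ : Equiv.Perm (Fin k), piOp K ι A q v hv σ G


/-- The rational function `F(t_1,…,t_n) = ∏_{i<j} (1 − t_i/t_j)/(q − q⁻¹ t_i/t_j)`. -/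
def exProd (K : Type) [Field K] (q : K) (n : ℕ) : RatF K (Fin n) :=
  ∏ p ∈ Finset.univ.filter (fun p : Fin n × Fin n => p.1 < p.2),
    (1 - tvar K (Fin n) p.1 / tvar K (Fin n) p.2) /
      (cst K (Fin n) q - cst K (Fin n) q⁻¹ * (tvar K (Fin n) p.1 / tvar K (Fin n) p.2))

/-! Write `f(a, b) = (1 − t_a/t_b)/(q − q⁻¹ t_a/t_b)`, so that `F = ∏_{i<j} f(i, j)`. A direct
computation gives `w(t_a/t_b) · f(b, a) = f(a, b)`. The weight of `π(σ)` carries one factor `w` for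
each inversion of `σ`, so multiplying `F(t_σ) = ∏_{i<j} f(σ i, σ j)` by it puts every factor in
increasing order, `f(min (σ i) (σ j), max (σ i) (σ j))`; since `{i, j} ↦ {σ i, σ j}` permutes the
pairs, this product is `F` again. -/

theorem Equiv.Perm.prod_filter_lt_min_max {α M : Type*} [Fintype α] [LinearOrder α]
    [CommMonoid M] (σ : Equiv.Perm α) (g : α → α → M) :
    ∏ p ∈ Finset.univ.filter (fun p : α × α => p.1 < p.2),
        g (min (σ p.1) (σ p.2)) (max (σ p.1) (σ p.2)) =
      ∏ p ∈ Finset.univ.filter (fun p : α × α => p.1 < p.2), g p.1 p.2 := by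
  have sort_perm : ∀ (τ : Equiv.Perm α) {a b : α}, a < b →
      min (τ a) (τ b) < max (τ a) (τ b) := fun τ a b hab =>
    min_lt_max.2 (τ.injective.ne hab.ne)
  have sort_perm_inv : ∀ (τ : Equiv.Perm α) {a b : α}, a < b →
      (min (τ⁻¹ (min (τ a) (τ b))) (τ⁻¹ (max (τ a) (τ b))),
        max (τ⁻¹ (min (τ a) (τ b))) (τ⁻¹ (max (τ a) (τ b)))) = (a, b) := by
    intro τ a b hab
    rcases le_total (τ a) (τ b) with h | h
    · simp [min_eq_left h, max_eq_right h, hab.le]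
    · simp [min_eq_right h, max_eq_left h, hab.le]
  refine Finset.prod_nbij' (fun p => (min (σ p.1) (σ p.2), max (σ p.1) (σ p.2)))
    (fun p => (min (σ⁻¹ p.1) (σ⁻¹ p.2), max (σ⁻¹ p.1) (σ⁻¹ p.2))) ?_ ?_ ?_ ?_ (fun _ _ => rfl)
  · simpa using fun a b => sort_perm σ
  · simpa using fun a b => sort_perm σ⁻¹
  · simpa using fun a b => sort_perm_inv σ
  · simpa using fun a b => sort_perm_inv σ⁻¹

theorem div_mul_inv_div_eq {F : Type*} [Field F] {Q x : F} (hx : x ≠ 0)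
    (h : Q - Q⁻¹ * x ≠ 0) (h' : Q - Q⁻¹ * x⁻¹ ≠ 0) :
    (Q⁻¹ - Q * x) / (Q - Q⁻¹ * x) * ((1 - x⁻¹) / (Q - Q⁻¹ * x⁻¹)) =
      (1 - x) / (Q - Q⁻¹ * x) := by
  rw [div_mul_div_comm, div_eq_div_iff (mul_ne_zero h h') h]
  field_simp
  ring

section

variable {K ι}

def exFactor (i j : ι) : RatF K ι :=
  (1 - tvar K ι i / tvar K ι j) / (cst K ι q - cst K ι q⁻¹ * (tvar K ι i / tvar K ι j))

theorem tvar_ne_zero (i : ι) : tvar K ι i ≠ 0 :=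
  (map_ne_zero_iff _ (IsFractionRing.injective _ _)).2 (X_ne_zero i)

theorem cst_inv (c : K) : cst K ι c⁻¹ = (cst K ι c)⁻¹ :=
  map_inv₀ _ c

theorem cst_sub_cst_inv_mul_tvar_div_ne_zero {q : K} (hq : q ≠ 0) {i j : ι} (hij : i ≠ j) :
    cst K ι q - cst K ι q⁻¹ * (tvar K ι i / tvar K ι j) ≠ 0 := by
  classical
  have hpoly : (C q * X j - C q⁻¹ * X i : MvPolynomial ι K) ≠ 0 := fun h =>
    hq (by simpa [Pi.single_eq_of_ne hij] using congrArg (eval (Pi.single j 1)) h)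
  have hj := tvar_ne_zero (K := K) j
  have hrepr : cst K ι q - cst K ι q⁻¹ * (tvar K ι i / tvar K ι j) =
      algebraMap _ (RatF K ι) (C q * X j - C q⁻¹ * X i) / tvar K ι j := by
    rw [eq_div_iff hj, sub_mul, mul_assoc, div_mul_cancel₀ _ hj]
    simp only [tvar, cst, map_sub, map_mul, algebraMap_eq,
      IsScalarTower.algebraMap_apply K (MvPolynomial ι K) (RatF K ι)]
  rw [hrepr]
  exact div_ne_zero ((map_ne_zero_iff _ (IsFractionRing.injective _ _)).2 hpoly) hj

theorem wfac_mul_exFactor_swap {q : K} (hq : q ≠ 0) {i j : ι} (hij : i ≠ j) :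
    wfac K ι q i j * exFactor q j i = exFactor q i j := by
  have hswap : tvar K ι j / tvar K ι i = (tvar K ι i / tvar K ι j)⁻¹ := (inv_div _ _).symm
  have h := cst_sub_cst_inv_mul_tvar_div_ne_zero (ι := ι) hq hij
  have h' := cst_sub_cst_inv_mul_tvar_div_ne_zero (ι := ι) hq hij.symm
  rw [hswap, cst_inv] at h'
  rw [cst_inv] at h
  simp only [wfac, exFactor, hswap, cst_inv]
  exact div_mul_inv_div_eq (div_ne_zero (tvar_ne_zero i) (tvar_ne_zero j)) h h'

theorem renHom_tvar (f : ι → ι) (hf : Function.Injective f) (i : ι) :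
    renHom K ι f hf (tvar K ι i) = tvar K ι (f i) :=
  (IsFractionRing.liftAlgHom_apply _ _).trans <|
    (IsFractionRing.lift_algebraMap _ _).trans (by simp [tvar])

theorem renHom_exFactor (f : ι → ι) (hf : Function.Injective f) (i j : ι) :
    renHom K ι f hf (exFactor q i j) = exFactor q (f i) (f j) := by
  simp only [exFactor, cst, map_div₀, map_sub, map_mul, map_one, renHom_tvar, AlgHom.commutes]

theorem extPerm_apply_self {k : ℕ} (v : Fin k → ι) (hv : Function.Injective v)
    (σ : Equiv.Perm (Fin k)) (i : Fin k) : extPerm ι v hv σ (v i) = v (σ i) := by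
  let := Classical.decPred (· ∈ Set.range v)
  exact σ.extendDomain_apply_image (Equiv.ofInjective v hv) i

theorem qWeight_mul_prod_exFactor {q : K} (hq : q ≠ 0) {k : ℕ} (v : Fin k → ι)
    (hv : Function.Injective v) (σ : Equiv.Perm (Fin k)) :
    qWeight K ι q v σ *
        ∏ p ∈ Finset.univ.filter (fun p : Fin k × Fin k => p.1 < p.2),
          exFactor q (v (σ p.1)) (v (σ p.2)) =
      ∏ p ∈ Finset.univ.filter (fun p : Fin k × Fin k => p.1 < p.2),
        exFactor q (v p.1) (v p.2) := by
  rw [← σ.prod_filter_lt_min_max (fun a b => exFactor q (v a) (v b)), qWeight,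
    ← Finset.filter_filter, Finset.prod_filter, ← Finset.prod_mul_distrib]
  refine Finset.prod_congr rfl fun p hp => ?_
  have hlt : p.1 < p.2 := (Finset.mem_filter.1 hp).2
  split_ifs with h
  · rw [min_eq_right h.le, max_eq_left h.le]
    exact wfac_mul_exFactor_swap hq (hv.ne (σ.injective.ne hlt.ne'))
  · rw [not_lt] at h
    rw [one_mul, min_eq_left h, max_eq_right h]

theorem renA_inF (f : ι → ι) (hf : Function.Injective f) (x : RatF K ι) :
    renA K ι A f hf (inF K ι A x) = inF K ι A (renHom K ι f hf x) := by
  simp [renA, inF, Algebra.TensorProduct.includeRight_apply]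

theorem piOp_inF {k : ℕ} (v : Fin k → ι) (hv : Function.Injective v)
    (σ : Equiv.Perm (Fin k)) (x : RatF K ι) :
    piOp K ι A q v hv σ (inF K ι A x) =
      inF K ι A (qWeight K ι q v σ * renHom K ι (extPerm ι v hv σ) (Equiv.injective _) x) := by
  rw [piOp, renA_inF, map_mul]

theorem piOp_prod_exFactor {q : K} (hq : q ≠ 0) {k : ℕ} (v : Fin k → ι)
    (hv : Function.Injective v) (σ : Equiv.Perm (Fin k)) :
    piOp K ι A q v hv σ (inF K ι A (∏ p ∈ Finset.univ.filter
        (fun p : Fin k × Fin k => p.1 < p.2), exFactor q (v p.1) (v p.2))) =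
      inF K ι A (∏ p ∈ Finset.univ.filter
        (fun p : Fin k × Fin k => p.1 < p.2), exFactor q (v p.1) (v p.2)) := by
  rw [piOp_inF, map_prod]
  simp only [renHom_exFactor, extPerm_apply_self]
  rw [qWeight_mul_prod_exFactor hq v hv σ]

end

theorem exProd_qSymmetric_general
    (K : Type) [Field K] (q : K) (hq : q ≠ 0)
    (A : Type) [Ring A] [Algebra K A] (n : ℕ) (σ : Equiv.Perm (Fin n)) :
    piOp K (Fin n) A q id Function.injective_id σ (inF K (Fin n) A (exProd K q n)) =
      inF K (Fin n) A (exProd K q n) :=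
  piOp_prod_exFactor A hq id Function.injective_id σ

/-- The rational function
`F(t_1,…,t_n) = ∏_{i<j} (1 − t_i/t_j)/(q − q⁻¹ t_i/t_j)` is `q`-symmetric:
`π(σ)F = F` for every `σ ∈ S_n`. -/
theorem exProd_qSymmetric
    (K : Type) [Field K] [CharZero K] (q : K) (hq : q ≠ 0) (hq2 : q ^ 2 ≠ 1)
    (A : Type) [Ring A] [Algebra K A] (n : ℕ) (σ : Equiv.Perm (Fin n)) :
    piOp K (Fin n) A q id Function.injective_id σ (inF K (Fin n) A (exProd K q n)) =
      inF K (Fin n) A (exProd K q n) :=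
  exProd_qSymmetric_general K q hq A n σ
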